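/- Let μ, ν ∈ ℝ be such that μ+ν and μ−ν are not negative odd integers, (μ+1)((μ+1)(μ+3) − ν²) ≥ 1/8, and μ(2e−1) − (1/4)e(e−1)|(μ−1)² − ν²| ≥ e³ − e² + 13e/4 − 4. Then the normalized Lommel function h_{μ,ν} belongs to the class S*_e of exponential starlike functions. -/

import Mathlib

open Complex Metric Set

noncomputable def poch (x : ℂ) (n : ℕ) : ℂ := ∏ k ∈ Finset.range n, (x + k)

/-- The class `P_e`: `p` is analytic on the unit disk, `p 0 = 1`, and `p` maps the
unit disk into `exp(𝔻)` (equivalently, `p` is subordinate to `exp`). -/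
def memPe (p : ℂ → ℂ) : Prop :=
  AnalyticOnNhd ℂ p (Metric.ball 0 1) ∧ p 0 = 1 ∧
    ∀ z ∈ Metric.ball (0:ℂ) 1, p z ∈ Complex.exp '' Metric.ball 0 1

/-- The class `K_e` of exponential convex functions. -/
def memKe (f : ℂ → ℂ) : Prop :=
  AnalyticOnNhd ℂ f (Metric.ball 0 1) ∧ f 0 = 0 ∧ deriv f 0 = 1 ∧
    (∀ z ∈ Metric.ball (0:ℂ) 1, deriv f z ≠ 0) ∧
    memPe (fun z => 1 + z * deriv (deriv f) z / deriv f z)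

/-- The class `S*_e` of exponential starlike functions. -/
def memSe (f : ℂ → ℂ) : Prop :=
  AnalyticOnNhd ℂ f (Metric.ball 0 1) ∧ f 0 = 0 ∧ deriv f 0 = 1 ∧
    (∀ z ∈ Metric.ball (0:ℂ) 1, z ≠ 0 → f z ≠ 0) ∧
    memPe (fun z => if z = 0 then 1 else z * deriv f z / f z)

/-- The normalized Lommel function of the first kind
`h_{μ,ν}(z) = z + ∑_{n≥1} ((−1/4)^n / (((μ−ν+3)/2)_n ((μ+ν+3)/2)_n)) z^{n+1}`. -/
noncomputable def lommelH (μ ν : ℝ) (z : ℂ) : ℂ :=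
  z + ∑' n : ℕ, (-1/4 : ℂ) ^ (n + 1) /
    (poch (((μ - ν + 3) / 2 : ℝ) : ℂ) (n + 1) * poch (((μ + ν + 3) / 2 : ℝ) : ℂ) (n + 1)) *
      z ^ (n + 2)


/-!
Put `a = (μ - ν + 3) / 2` and `b = (μ + ν + 3) / 2`. Since `e² - 3e + 1 > 0`, the hypothesis forces
`ν² ≤ (μ + 1)²`, i.e. `a, b ≥ 1`, and then `(a)ₙ (b)ₙ ≥ n!`. Hence `h_{μ,ν}(z) = z G(z)` where
`G = ∑ cₙ zⁿ` has `c₀ = 1` and `|cₙ| ≤ 4⁻ⁿ / n!`. On the unit disk this gives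
`|G - 1| ≤ e^{1/4} - 1 < 1/3` and `|G'| ≤ e^{1/4} / 4 < 1/3`, so `w = z h'/h - 1 = z G'/G` satisfies
`|w| ≤ 1/2`, and then `|log (1 + w)| ≤ 3|w|/2 < 1`.
-/

open scoped Nat

lemma Real.hasSum_pow_div_factorial (t : ℝ) : HasSum (fun n => t ^ n / n !) (Real.exp t) :=
  Real.exp_eq_exp_ℝ ▸ NormedSpace.expSeries_div_hasSum_exp t

lemma Real.hasSum_natCast_mul_pow_div_factorial (t : ℝ) :
    HasSum (fun n : ℕ => n * (t ^ n / n !)) (t * Real.exp t) := by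
  have hshift : ∀ n : ℕ, ((n + 1 : ℕ) : ℝ) * (t ^ (n + 1) / (n + 1)!) = t * (t ^ n / n !) := by
    intro n
    rw [Nat.factorial_succ]
    push_cast
    field_simp
    ring
  rw [← hasSum_nat_add_iff' 1]
  simpa only [hshift, Finset.sum_range_one, Nat.cast_zero, zero_mul, sub_zero]
    using (Real.hasSum_pow_div_factorial t).mul_left t

lemma mul_tsum_mul_pow_eq {c : ℕ → ℂ} {z : ℂ} (hc0 : c 0 = 1)
    (hs : Summable fun n => c n * z ^ n) :
    z * ∑' n, c n * z ^ n = z + ∑' n, c (n + 1) * z ^ (n + 2) := by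
  rw [hs.tsum_eq_zero_add, hc0, pow_zero, mul_one, mul_add, mul_one, ← tsum_mul_left]
  congr 2 with n
  ring

section ExpMajorant

variable {c : ℕ → ℂ} {t : ℝ}

lemma summable_mul_pow_of_norm_le (hc : ∀ n, ‖c n‖ ≤ t ^ n / n !) (z : ℂ) :
    Summable (fun n => c n * z ^ n) := by
  refine .of_norm_bounded (Real.summable_pow_div_factorial (t * ‖z‖)) fun n => ?_
  rw [norm_mul, norm_pow, mul_pow, mul_div_right_comm]
  exact mul_le_mul_of_nonneg_right (hc n) (by positivity)

lemma norm_mul_pow_le (hc : ∀ n, ‖c n‖ ≤ t ^ n / n !) {z : ℂ} (hz : ‖z‖ ≤ 1) (n : ℕ) :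
    ‖c n * z ^ n‖ ≤ t ^ n / n ! := by
  rw [norm_mul, norm_pow]
  exact (mul_le_of_le_one_right (norm_nonneg _) (pow_le_one₀ (norm_nonneg _) hz)).trans (hc n)

lemma norm_mul_natCast_mul_pow_le (hc : ∀ n, ‖c n‖ ≤ t ^ n / n !) {z : ℂ} (hz : ‖z‖ ≤ 1)
    (n : ℕ) : ‖c n * (n * z ^ (n - 1))‖ ≤ n * (t ^ n / n !) := by
  rw [norm_mul, norm_mul, norm_pow, Complex.norm_natCast, mul_left_comm]
  exact mul_le_mul_of_nonneg_left
    ((mul_le_of_le_one_right (norm_nonneg _) (pow_le_one₀ (norm_nonneg _) hz)).trans (hc n))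
    n.cast_nonneg

lemma norm_tsum_mul_pow_sub_one_le (hc : ∀ n, ‖c n‖ ≤ t ^ n / n !) (hc0 : c 0 = 1) {z : ℂ}
    (hz : ‖z‖ ≤ 1) : ‖∑' n, c n * z ^ n - 1‖ ≤ Real.exp t - 1 := by
  rw [(summable_mul_pow_of_norm_le hc z).tsum_eq_zero_add, hc0, pow_zero, mul_one,
    add_sub_cancel_left]
  refine tsum_of_norm_bounded ?_ fun n => norm_mul_pow_le hc hz (n + 1)
  simpa using (hasSum_nat_add_iff' 1).2 (Real.hasSum_pow_div_factorial t)

lemma norm_tsum_mul_natCast_mul_pow_le (hc : ∀ n, ‖c n‖ ≤ t ^ n / n !) {z : ℂ}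
    (hz : ‖z‖ ≤ 1) : ‖∑' n, c n * (n * z ^ (n - 1))‖ ≤ t * Real.exp t :=
  tsum_of_norm_bounded (Real.hasSum_natCast_mul_pow_div_factorial t)
    (norm_mul_natCast_mul_pow_le hc hz)

lemma hasDerivAt_tsum_mul_pow (hc : ∀ n, ‖c n‖ ≤ t ^ n / n !) {z : ℂ}
    (hz : z ∈ ball (0 : ℂ) 1) :
    HasDerivAt (fun w => ∑' n, c n * w ^ n) (∑' n, c n * (n * z ^ (n - 1))) z :=
  hasDerivAt_tsum_of_isPreconnected (Real.hasSum_natCast_mul_pow_div_factorial t).summable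
    isOpen_ball (convex_ball 0 1).isPreconnected
    (fun n w _ => (hasDerivAt_pow n w).const_mul (c n))
    (fun n _ hw => norm_mul_natCast_mul_pow_le hc (mem_ball_zero_iff.1 hw).le n)
    (mem_ball_self one_pos) (summable_mul_pow_of_norm_le hc 0) hz

end ExpMajorant

lemma memPe_of_norm_sub_one_le_half {p : ℂ → ℂ} (hp : AnalyticOnNhd ℂ p (ball 0 1))
    (hp0 : p 0 = 1) (hp1 : ∀ z ∈ ball (0 : ℂ) 1, ‖p z - 1‖ ≤ 1 / 2) : memPe p := by
  refine ⟨hp, hp0, fun z hz => ⟨log (p z), ?_, exp_log fun h => ?_⟩⟩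
  · have hlog := norm_log_one_add_half_le_self (hp1 z hz)
    rw [add_sub_cancel] at hlog
    rw [mem_ball_zero_iff]
    linarith [hp1 z hz]
  · have := hp1 z hz
    norm_num [h] at this

lemma memSe_mul_of_norm_le_half {G : ℂ → ℂ} (hG : DifferentiableOn ℂ G (ball 0 1))
    (hG0 : G 0 = 1) (hGne : ∀ z ∈ ball (0 : ℂ) 1, G z ≠ 0)
    (hG' : ∀ z ∈ ball (0 : ℂ) 1, ‖z * deriv G z / G z‖ ≤ 1 / 2) :
    memSe (fun z => z * G z) := by
  have hGan : AnalyticOnNhd ℂ G (ball 0 1) := hG.analyticOnNhd isOpen_ball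
  have hderiv : ∀ z ∈ ball (0 : ℂ) 1, deriv (fun z => z * G z) z = G z + z * deriv G z := by
    intro z hz
    simpa using ((hasDerivAt_id' z).fun_mul (hGan z hz).differentiableAt.hasDerivAt).deriv
  have hq : EqOn (fun z => 1 + z * deriv G z / G z)
      (fun z => if z = 0 then 1 else z * deriv (fun z => z * G z) z / (z * G z)) (ball 0 1) := by
    intro z hz
    dsimp only
    split_ifs with h0
    · simp [h0]
    · rw [hderiv z hz]
      field_simp [hGne z hz]
  refine ⟨analyticOnNhd_id.mul hGan, by simp, by simpa [hG0] using hderiv 0 (mem_ball_self one_pos),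
    fun z hz h0 => mul_ne_zero h0 (hGne z hz), ?_⟩
  refine memPe_of_norm_sub_one_le_half
    ((analyticOnNhd_const.add ((analyticOnNhd_id.mul hGan.deriv).div hGan hGne)).congr
      isOpen_ball hq) (by simp) fun z hz => ?_
  have hqz := hq hz
  beta_reduce at hqz ⊢
  rw [← hqz, add_sub_cancel_left]
  exact hG' z hz

theorem memSe_mul_tsum_of_norm_le {c : ℕ → ℂ} (hc : ∀ n, ‖c n‖ ≤ (1 / 4 : ℝ) ^ n / n !)
    (hc0 : c 0 = 1) : memSe (fun z => z * ∑' n, c n * z ^ n) := by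
  have he : Real.exp (1 / 4) < 4 / 3 :=
    (Real.exp_bound_div_one_sub_of_interval' (by norm_num) (by norm_num)).trans_eq (by norm_num)
  have hG : ∀ z ∈ ball (0 : ℂ) 1, 2 / 3 < ‖∑' n, c n * z ^ n‖ := fun z hz => by
    have := norm_tsum_mul_pow_sub_one_le hc hc0 (mem_ball_zero_iff.1 hz).le
    have := norm_le_insert (∑' n, c n * z ^ n) 1
    rw [norm_one] at this
    linarith
  have hGpos : ∀ z ∈ ball (0 : ℂ) 1, 0 < ‖∑' n, c n * z ^ n‖ :=
    fun z hz => (by norm_num : (0 : ℝ) < 2 / 3).trans (hG z hz)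
  refine memSe_mul_of_norm_le_half
    (fun z hz => (hasDerivAt_tsum_mul_pow hc hz).differentiableAt.differentiableWithinAt) ?_
    (fun z hz => norm_pos_iff.1 (hGpos z hz)) fun z hz => ?_
  · show ∑' n, c n * 0 ^ n = 1
    rw [tsum_eq_single 0 fun n hn => by simp [zero_pow hn]]
    simp [hc0]
  have hz1 := (mem_ball_zero_iff.1 hz).le
  have hD := norm_tsum_mul_natCast_mul_pow_le hc hz1
  rw [(hasDerivAt_tsum_mul_pow hc hz).deriv, norm_div, norm_mul, div_le_iff₀ (hGpos z hz)]
  calc ‖z‖ * _ ≤ 1 * (1 / 3) := mul_le_mul hz1 (by linarith) (norm_nonneg _) zero_le_one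
    _ ≤ _ := by linarith [hG z hz]

lemma factorial_le_prod_add {a : ℝ} (ha : 1 ≤ a) (n : ℕ) :
    (n ! : ℝ) ≤ ∏ k ∈ Finset.range n, (a + k) := by
  rw [← Finset.prod_range_add_one_eq_factorial]
  push_cast
  exact Finset.prod_le_prod (fun k _ => by positivity) fun k _ => by linarith

lemma factorial_le_norm_poch {a : ℝ} (ha : 1 ≤ a) (n : ℕ) : (n ! : ℝ) ≤ ‖poch a n‖ := by
  have : poch a n = ((∏ k ∈ Finset.range n, (a + k) : ℝ) : ℂ) := by simp [poch]
  rw [this, Complex.norm_real, Real.norm_eq_abs]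
  exact (factorial_le_prod_add ha n).trans (le_abs_self _)

/-- `lommelH μ ν z` is by definition `z + ∑' n, lommelCoeff a b (n + 1) * z ^ (n + 2)` with
`a = (μ - ν + 3) / 2` and `b = (μ + ν + 3) / 2`. -/
noncomputable def lommelCoeff (a b : ℂ) (n : ℕ) : ℂ := (-1/4 : ℂ) ^ n / (poch a n * poch b n)

lemma lommelCoeff_zero (a b : ℂ) : lommelCoeff a b 0 = 1 := by simp [lommelCoeff, poch]

lemma norm_lommelCoeff_le {a b : ℝ} (ha : 1 ≤ a) (hb : 1 ≤ b) (n : ℕ) :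
    ‖lommelCoeff a b n‖ ≤ (1 / 4 : ℝ) ^ n / n ! := by
  have hA := factorial_le_norm_poch ha n
  have hB : 1 ≤ ‖poch (b : ℂ) n‖ :=
    (Nat.one_le_cast.2 n.factorial_pos).trans (factorial_le_norm_poch hb n)
  rw [lommelCoeff, norm_div, norm_mul, norm_pow, show ‖(-1/4 : ℂ)‖ = 1 / 4 by norm_num]
  gcongr
  simpa using mul_le_mul hA hB zero_le_one (norm_nonneg _)

lemma lommel_params_ge_one {μ ν : ℝ}
    (h : μ * (2 * Real.exp 1 - 1) -
        (1 / 4) * Real.exp 1 * (Real.exp 1 - 1) * |(μ - 1) ^ 2 - ν ^ 2| ≥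
      (Real.exp 1) ^ 3 - (Real.exp 1) ^ 2 + 13 * Real.exp 1 / 4 - 4) :
    1 ≤ (μ - ν + 3) / 2 ∧ 1 ≤ (μ + ν + 3) / 2 := by
  set e := Real.exp 1
  have he₁ : 2.7182818283 < e := Real.exp_one_gt_d9
  have he₂ : e < 2.7182818286 := Real.exp_one_lt_d9
  have hK : 0 < (1 / 4) * e * (e - 1) := by nlinarith
  have hμ : 0 < μ := by nlinarith [mul_nonneg hK.le (abs_nonneg ((μ - 1) ^ 2 - ν ^ 2))]
  have hR : 0 < e ^ 3 - e ^ 2 + 13 * e / 4 - 4 := by nlinarith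
  have hν : (1 / 4) * e * (e - 1) * (ν ^ 2 - (μ + 1) ^ 2) ≤ 0 := by
    nlinarith [mul_le_mul_of_nonneg_left (neg_abs_le ((μ - 1) ^ 2 - ν ^ 2)) hK.le,
      mul_pos hμ (show 0 < e ^ 2 - 3 * e + 1 by nlinarith)]
  have hsq : ν ^ 2 ≤ (μ + 1) ^ 2 := by nlinarith
  obtain ⟨hlo, hhi⟩ := abs_le_of_sq_le_sq' hsq (by linarith)
  constructor <;> linarith

theorem lommel_exponential_starlike_general (μ ν : ℝ)
    (h2 : μ * (2 * Real.exp 1 - 1) -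
        (1 / 4) * Real.exp 1 * (Real.exp 1 - 1) * |(μ - 1) ^ 2 - ν ^ 2| ≥
      (Real.exp 1) ^ 3 - (Real.exp 1) ^ 2 + 13 * Real.exp 1 / 4 - 4) :
    memSe (lommelH μ ν) := by
  obtain ⟨ha, hb⟩ := lommel_params_ge_one h2
  have hc := norm_lommelCoeff_le ha hb
  suffices lommelH μ ν = fun z => z * ∑' n, lommelCoeff _ _ n * z ^ n from
    this ▸ memSe_mul_tsum_of_norm_le hc (lommelCoeff_zero _ _)
  funext z
  exact (mul_tsum_mul_pow_eq (lommelCoeff_zero _ _) (summable_mul_pow_of_norm_le hc z)).symm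

/-- Sufficient condition for the normalized Lommel function `h_{μ,ν}` to be
exponential starlike. -/
theorem lommel_exponential_starlike (μ ν : ℝ)
    (hodd : ∀ k : ℕ, μ + ν ≠ -(2 * (k : ℝ) + 1) ∧ μ - ν ≠ -(2 * (k : ℝ) + 1))
    (h1 : (μ + 1) * ((μ + 1) * (μ + 3) - ν ^ 2) ≥ 1 / 8)
    (h2 : μ * (2 * Real.exp 1 - 1) -
        (1 / 4) * Real.exp 1 * (Real.exp 1 - 1) * |(μ - 1) ^ 2 - ν ^ 2| ≥
      (Real.exp 1) ^ 3 - (Real.exp 1) ^ 2 + 13 * Real.exp 1 / 4 - 4) :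
    memSe (lommelH μ ν) :=
  lommel_exponential_starlike_general μ ν h2
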